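/- arXiv:1603.01815 — 2 statements merged into one kernel-verified Lean document; each statement's English description precedes it below -/
import Mathlib

section
/- The divided difference operator Δ_{k-1} acting on the variables x_{k-1}, x_k satisfies: if g(x) is symmetric in (x_1,...,x_k) and w is an auxiliary variable, then Δ_{k-1} [ (∏_{j=1}^{k-1} (w - t x_j)/(w - x_j)) · g(x)/(w - x_k) ] = t · (∏_{j=1}^{k-2} (w - t x_j)/(w - x_j)) · g(x)/((w - x_{k-1})(w - x_k)). -/
/-! With `a = x (k - 2)` and `b = x (k - 1)`, the transposition fixes the first `k - 2` factors
of the product and, by symmetry, `g`; these factor out of the divided difference, which leaves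
`((w - t b) / ((w - b) (w - a)) - (w - t a) / ((w - a) (w - b))) / (a - b) = t / ((w - a) (w - b))`.
-/

open Finset

theorem prod_range_comp_swap_of_le {α M : Type*} [CommMonoid M] (φ : α → M) (x : ℕ → α)
    {n i j : ℕ} (hi : n ≤ i) (hj : n ≤ j) :
    ∏ l ∈ range n, φ ((x ∘ Equiv.swap i j) l) = ∏ l ∈ range n, φ (x l) :=
  prod_congr rfl fun l hl => by
    rw [mem_range] at hl
    rw [Function.comp_apply, Equiv.swap_apply_of_ne_of_ne (by omega) (by omega)]

/-- When `w = a` or `w = b` both sides are `0`, since `x / 0 = 0`. -/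
theorem div_sub_div_swap_div_sub {K : Type*} [Field K] (t w a b : K) (hab : a ≠ b) :
    ((w - t * b) / (w - b) / (w - a) - (w - t * a) / (w - a) / (w - b)) / (a - b) =
      t / ((w - a) * (w - b)) := by
  rcases eq_or_ne w a with rfl | hwa
  · simp
  rcases eq_or_ne w b with rfl | hwb
  · simp
  have hab' : a - b ≠ 0 := sub_ne_zero.mpr hab
  have hwa' : w - a ≠ 0 := sub_ne_zero.mpr hwa
  have hwb' : w - b ≠ 0 := sub_ne_zero.mpr hwb
  field_simp
  ring

theorem divided_difference_identity_general
    (F : Type*) [Field F] (k : ℕ) (t w : F) (x : ℕ → F)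
    (g : (ℕ → F) → F)
    (hg : ∀ (y : ℕ → F) (i j : ℕ), i < k → j < k → g (y ∘ (Equiv.swap i j)) = g y)
    (hx : x (k - 2) ≠ x (k - 1)) :
    (fun Fx : (ℕ → F) → F =>
        (Fx (x ∘ (Equiv.swap (k - 2) (k - 1))) - Fx x) / (x (k - 2) - x (k - 1)) =
          t * (∏ j ∈ Finset.range (k - 2), (w - t * x j) / (w - x j)) * g x /
            ((w - x (k - 2)) * (w - x (k - 1))))
      (fun y => (∏ j ∈ Finset.range (k - 1), (w - t * y j) / (w - y j)) * g y /
        (w - y (k - 1))) := by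
  beta_reduce
  obtain ⟨n, rfl⟩ : ∃ n, k = n + 2 := ⟨k - 2, by
    have : k - 2 ≠ k - 1 := fun h => hx (congrArg x h)
    omega⟩
  simp only [Nat.add_sub_cancel, Nat.reduceSubDiff] at hx ⊢
  rw [prod_range_succ, prod_range_succ,
    prod_range_comp_swap_of_le (fun z => (w - t * z) / (w - z)) x le_rfl n.le_succ,
    hg x n (n + 1) (by omega) (by omega)]
  simp only [Function.comp_apply, Equiv.swap_apply_left, Equiv.swap_apply_right]
  linear_combination (∏ j ∈ range n, (w - t * x j) / (w - x j)) * g x *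
    div_sub_div_swap_div_sub t w (x n) (x (n + 1)) hx

/-- The divided-difference operator `Δ_{k-1}` (acting on the variables
`x_{k-1}, x_k`; here 0-indexed as `x (k-2), x (k-1)`) satisfies: if `g` is symmetric in
the variables `x_1,…,x_k` and `w` is an auxiliary variable, then
`Δ_{k-1} [ (∏_{j=1}^{k-1} (w - t x_j)/(w - x_j)) · g(x)/(w - x_k) ]
  = t · (∏_{j=1}^{k-2} (w - t x_j)/(w - x_j)) · g(x)/((w - x_{k-1})(w - x_k))`,
where `Δ F (x) = (F(σ x) - F(x))/(x_{k-1} - x_k)` and `σ` transposes `x_{k-1}` and `x_k`. -/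
theorem divided_difference_identity
    (F : Type*) [Field F] (k : ℕ) (hk : 2 ≤ k) (t w : F) (x : ℕ → F)
    (g : (ℕ → F) → F)
    (hg : ∀ (y : ℕ → F) (i j : ℕ), i < k → j < k → g (y ∘ (Equiv.swap i j)) = g y)
    (hx : x (k - 2) ≠ x (k - 1)) (hw : ∀ j < k, w ≠ x j) :
    (fun Fx : (ℕ → F) → F =>
        (Fx (x ∘ (Equiv.swap (k - 2) (k - 1))) - Fx x) / (x (k - 2) - x (k - 1)) =
          t * (∏ j ∈ Finset.range (k - 2), (w - t * x j) / (w - x j)) * g x /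
            ((w - x (k - 2)) * (w - x (k - 1))))
      (fun y => (∏ j ∈ Finset.range (k - 1), (w - t * y j) / (w - y j)) * g y /
        (w - y (k - 1))) :=
  divided_difference_identity_general F k t w x g hg hx
end

section
/- For the t-boson L-matrix L(x) = [[1, φ†],[xφ, x]] (a 2×2 matrix with operator entries acting on the t-boson Fock space), the intertwining (RLL) equation holds: R_{ab}(y/x) L_a(x) L_b(y) = L_b(y) L_a(x) R_{ab}(y/x), where R(z) is the six-vertex R-matrix with nonzero entries R_{00,00}=R_{11,11}=1-tz, R_{01,01}=t(1-z), R_{01,10}=(1-t)z, R_{10,01}=1-t, R_{10,10}=1-z. -/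
namespace RLL

variable {F : Type*} [Field F]

/-- The t-boson Fock space. -/
abbrev Fock (F : Type*) [Field F] := ℕ →₀ F

/-- The t-boson L-matrix `L(x) = [[1, φ†],[xφ, x]]`, a 2×2 matrix with entries in
the endomorphisms of the Fock space. -/
noncomputable def Lmat (x : F) (a adag : Module.End F (Fock F)) :
    Matrix (Fin 2) (Fin 2) (Module.End F (Fock F)) :=
  Matrix.of
    ![![(1 : Module.End F (Fock F)), adag],
      ![algebraMap F (Module.End F (Fock F)) x * a, algebraMap F (Module.End F (Fock F)) x]]

/-- A 2×2 operator matrix acting in auxiliary space `a` (the first tensor factor). -/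
noncomputable def embA (M : Matrix (Fin 2) (Fin 2) (Module.End F (Fock F))) :
    Matrix (Fin 2 × Fin 2) (Fin 2 × Fin 2) (Module.End F (Fock F)) := fun p q =>
  if p.2 = q.2 then M p.1 q.1 else 0

/-- A 2×2 operator matrix acting in auxiliary space `b` (the second tensor factor). -/
noncomputable def embB (M : Matrix (Fin 2) (Fin 2) (Module.End F (Fock F))) :
    Matrix (Fin 2 × Fin 2) (Fin 2 × Fin 2) (Module.End F (Fock F)) := fun p q =>
  if p.1 = q.1 then M p.2 q.2 else 0

/-- The six-vertex R-matrix, with scalar entries viewed in the endomorphism algebra. -/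
noncomputable def Rop (t w : F) :
    Matrix (Fin 2 × Fin 2) (Fin 2 × Fin 2) (Module.End F (Fock F)) := fun p q =>
  algebraMap F (Module.End F (Fock F))
    (if p = (0, 0) ∧ q = (0, 0) then 1 - t * w
     else if p = (0, 1) ∧ q = (0, 1) then t * (1 - w)
     else if p = (0, 1) ∧ q = (1, 0) then (1 - t) * w
     else if p = (1, 0) ∧ q = (0, 1) then 1 - t
     else if p = (1, 0) ∧ q = (1, 0) then 1 - w
     else if p = (1, 1) ∧ q = (1, 1) then 1 - t * w
     else 0)

private lemma esub_mul {F : Type*} [Field F] (A B C : Module.End F (Fock F)) :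
    (A - B) * C = A * C - B * C := sub_mul A B C

private lemma emul_sub {F : Type*} [Field F] (A B C : Module.End F (Fock F)) :
    A * (B - C) = A * B - A * C := mul_sub A B C

private lemma eadd_mul {F : Type*} [Field F] (A B C : Module.End F (Fock F)) :
    (A + B) * C = A * C + B * C := add_mul A B C

private lemma emul_add {F : Type*} [Field F] (A B C : Module.End F (Fock F)) :
    A * (B + C) = A * B + A * C := mul_add A B C

set_option maxHeartbeats 4000000 in
/-- For the t-boson L-matrix `L(x) = [[1, φ†],[xφ, x]]` (with
`φ†|m⟩ = (1-t^{m+1})|m+1⟩`, `φ|m⟩ = |m-1⟩`, `φ|0⟩ = 0`), the intertwining (RLL)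
equation `R_{ab}(y/x) L_a(x) L_b(y) = L_b(y) L_a(x) R_{ab}(y/x)` holds, with the
six-vertex R-matrix. -/
theorem rll_tboson
    (F : Type*) [Field F] (t x y : F) (hx : x ≠ 0)
    (a adag : Module.End F (Fock F))
    (ha0 : a (Finsupp.single 0 1) = 0)
    (ha : ∀ m : ℕ, a (Finsupp.single (m + 1) 1) = Finsupp.single m 1)
    (hadag : ∀ m : ℕ,
      adag (Finsupp.single m 1) = (1 - t ^ (m + 1)) • Finsupp.single (m + 1) 1) :
    Rop t (y / x) * embA (Lmat x a adag) * embB (Lmat y a adag) =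
      embB (Lmat y a adag) * embA (Lmat x a adag) * Rop t (y / x) := by
  have h : a * adag = t • (adag * a) + (1 - t) • (1 : Module.End F (Fock F)) := by
    apply Finsupp.lhom_ext
    intro m c
    have hs : (Finsupp.single m c : Fock F) = c • Finsupp.single m 1 := by
      simp [Finsupp.smul_single]
    rw [hs, map_smul, map_smul]
    congr 1
    cases m with
    | zero =>
      simp only [Module.End.mul_apply, LinearMap.add_apply, LinearMap.smul_apply,
        Module.End.one_apply]
      rw [hadag 0, map_smul, ha 0, ha0, map_zero, smul_zero, pow_one]
      exact (zero_add _).symm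
    | succ n =>
      simp only [Module.End.mul_apply, LinearMap.add_apply, LinearMap.smul_apply,
        Module.End.one_apply]
      rw [hadag (n+1), map_smul, ha (n+1), ha n, hadag n, smul_smul, ← add_smul]
      congr 1
      ring
  obtain ⟨w, rfl⟩ : ∃ w, y = w * x := ⟨y / x, (div_mul_cancel₀ y hx).symm⟩
  rw [mul_div_cancel_right₀ w hx]
  rw [← Matrix.ext_iff]
  simp only [Prod.forall, Fin.forall_fin_two]
  repeat' apply And.intro
  all_goals
    simp only [Matrix.mul_apply, Fintype.sum_prod_type, Fin.sum_univ_two, Rop, embA, embB, Lmat]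
  all_goals
    norm_num [Prod.ext_iff]
  all_goals
    simp only [Algebra.algebraMap_eq_smul_one, esub_mul, emul_sub, eadd_mul, emul_add,
      smul_mul_assoc, mul_smul_comm, one_mul, mul_one, mul_zero, zero_mul, smul_zero,
      add_zero, zero_add, smul_smul, h, smul_add, smul_sub, sub_zero, zero_sub]
  all_goals
    module

end RLL
end
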